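/- arXiv:2005.00539 — 8 statements merged into one kernel-verified Lean document; each statement's English description precedes it below -/
import Mathlib

section
/- Let X be a d-space. Then for every nonempty closed subset A of X, the set max(A) of maximal elements of A (with respect to the specialization order) is nonempty, and A equals the downward closure of max(A) in the specialization order, i.e., A = ↓max(A). -/
open Set Topology

universe u

variable {X : Type u}

/-- Specialization order: `x ≤ y` iff `x ∈ closure {y}`. -/
def specLE [TopologicalSpace X] (x y : X) : Prop := x ∈ closure ({y} : Set X)

/-- Directed subset w.r.t. the specialization order. -/
def dirOn [TopologicalSpace X] (D : Set X) : Prop :=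
  D.Nonempty ∧ ∀ a ∈ D, ∀ b ∈ D, ∃ c ∈ D, specLE a c ∧ specLE b c

/-- Downward closure w.r.t. the specialization order. -/
def dClo [TopologicalSpace X] (A : Set X) : Set X := {x | ∃ a ∈ A, specLE x a}

/-- Upward closure w.r.t. the specialization order. -/
def uClo [TopologicalSpace X] (A : Set X) : Set X := {x | ∃ a ∈ A, specLE a x}

/-- `x` is a supremum of `D` w.r.t. the specialization order. -/
def IsSupOf [TopologicalSpace X] (D : Set X) (x : X) : Prop :=
  (∀ d ∈ D, specLE d x) ∧ ∀ y, (∀ d ∈ D, specLE d y) → specLE x y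

/-- A d-space: a T0 space in which every directed set (for the specialization order)
has a supremum, and every open set is inaccessible by directed suprema. -/
def IsDSpace (X : Type u) [TopologicalSpace X] : Prop :=
  T0Space X ∧ (∀ D : Set X, dirOn D → ∃ x, IsSupOf D x) ∧
    ∀ D : Set X, dirOn D → ∀ x, IsSupOf D x →
      ∀ U : Set X, IsOpen U → x ∈ U → (D ∩ U).Nonempty

/-- A set is saturated if it is the intersection of the open sets containing it. -/
def IsSat [TopologicalSpace X] (A : Set X) : Prop :=
  A = ⋂₀ {U : Set X | IsOpen U ∧ A ⊆ U}

/-- The collection of nonempty compact saturated subsets. -/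
def KSet (X : Type u) [TopologicalSpace X] : Set (Set X) :=
  {K | K.Nonempty ∧ IsCompact K ∧ IsSat K}

/-- A filtered family of sets: nonempty, and every two members contain a common member. -/
def FiltFam [TopologicalSpace X] (𝒦 : Set (Set X)) : Prop :=
  𝒦.Nonempty ∧ ∀ K₁ ∈ 𝒦, ∀ K₂ ∈ 𝒦, ∃ K₃ ∈ 𝒦, K₃ ⊆ K₁ ∧ K₃ ⊆ K₂

/-- Well-filtered space. -/
def IsWF (X : Type u) [TopologicalSpace X] : Prop :=
  T0Space X ∧ ∀ 𝒦 : Set (Set X), 𝒦 ⊆ KSet X → FiltFam 𝒦 →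
    ∀ U : Set X, IsOpen U → ⋂₀ 𝒦 ⊆ U → ∃ K ∈ 𝒦, K ⊆ U

/-- Sober space: every irreducible closed subset is the closure of a unique point. -/
def IsSober (X : Type u) [TopologicalSpace X] : Prop :=
  ∀ A : Set X, IsIrreducible A → IsClosed A → ∃! x : X, A = closure {x}

/-- `V` is way below `U` in the lattice of open sets: every open cover of `U`
has a finite subfamily covering `V`. -/
def wayBelow [TopologicalSpace X] (V U : Set X) : Prop :=
  ∀ 𝒞 : Set (Set X), (∀ W ∈ 𝒞, IsOpen W) → U ⊆ ⋃₀ 𝒞 →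
    ∃ 𝒟 ⊆ 𝒞, 𝒟.Finite ∧ V ⊆ ⋃₀ 𝒟

/-- Core compact space. -/
def CoreCompact (X : Type u) [TopologicalSpace X] : Prop :=
  ∀ (x : X) (U : Set X), IsOpen U → x ∈ U →
    ∃ V : Set X, IsOpen V ∧ x ∈ V ∧ wayBelow V U

/-- The underlying type of the Smyth power space: nonempty compact saturated subsets. -/
abbrev KS (X : Type u) [TopologicalSpace X] : Type u :=
  {K : Set X // K.Nonempty ∧ IsCompact K ∧ IsSat K}

/-- The upper Vietoris topology on `KS X`, generated by the sets
`□U = {K | K ⊆ U}` for `U` open; this makes `KS X` the Smyth power space `P_S(X)`. -/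
instance (X : Type u) [TopologicalSpace X] : TopologicalSpace (KS X) :=
  TopologicalSpace.generateFrom
    {S | ∃ U : Set X, IsOpen U ∧ S = {K : KS X | (K : Set X) ⊆ U}}

/-- Rudin set: a nonempty closed set that is a minimal closed set meeting all
members of some filtered family of nonempty compact saturated sets. -/
def RudinSet [TopologicalSpace X] (A : Set X) : Prop :=
  IsClosed A ∧ A.Nonempty ∧ ∃ 𝒦 : Set (Set X), 𝒦 ⊆ KSet X ∧ FiltFam 𝒦 ∧
    (∀ K ∈ 𝒦, (K ∩ A).Nonempty) ∧
    ∀ B : Set X, IsClosed B → B ⊆ A → (∀ K ∈ 𝒦, (K ∩ B).Nonempty) → B = A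

/-- Well-filtered determined (WD) set. -/
def IsWDSet [TopologicalSpace X] (A : Set X) : Prop :=
  IsClosed A ∧ A.Nonempty ∧ ∀ (Y : Type u) [TopologicalSpace Y], IsWF Y →
    ∀ f : X → Y, Continuous f → ∃ y : Y, closure (f '' A) = closure {y}

/-- Rudin space: every irreducible closed set is a Rudin set. -/
def RudinSpace (X : Type u) [TopologicalSpace X] : Prop :=
  ∀ A : Set X, IsClosed A → IsIrreducible A → RudinSet A

/-- WD space: every irreducible closed set is a WD set. -/
def WDSpace (X : Type u) [TopologicalSpace X] : Prop :=
  ∀ A : Set X, IsClosed A → IsIrreducible A → IsWDSet A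

/-- DC space: every irreducible closed set is the closure of a directed set. -/
def DCSpace (X : Type u) [TopologicalSpace X] : Prop :=
  ∀ A : Set X, IsClosed A → IsIrreducible A → ∃ D : Set X, dirOn D ∧ A = closure D

lemma specLE_refl [TopologicalSpace X] (x : X) : specLE x x := subset_closure rfl

lemma specLE_trans [TopologicalSpace X] {x y z : X} (h1 : specLE x y) (h2 : specLE y z) :
    specLE x z := by
  have : closure ({y} : Set X) ⊆ closure ({z} : Set X) :=
    closure_minimal (Set.singleton_subset_iff.2 h2) isClosed_closure
  exact this h1

/-- In a d-space, every nonempty closed set `A` has a nonempty set of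
maximal elements (w.r.t. the specialization order), and `A = ↓max(A)`. -/
theorem stmt0 {X : Type u} [TopologicalSpace X] (hX : IsDSpace X)
    (A : Set X) (hA : IsClosed A) (hne : A.Nonempty) :
    ({a ∈ A | ∀ b ∈ A, specLE a b → a = b}).Nonempty ∧
      A = dClo {a ∈ A | ∀ b ∈ A, specLE a b → a = b} := by
  obtain ⟨hT0, hsup, hopen⟩ := hX
  haveI : T0Space X := hT0
  have antisymm : ∀ {x y : X}, specLE x y → specLE y x → x = y := by
    intro x y h1 h2
    have hx : y ⤳ x := specializes_iff_mem_closure.2 h1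
    have hy : x ⤳ y := specializes_iff_mem_closure.2 h2
    exact (hy.antisymm hx).eq
  letI P : PartialOrder X :=
    { le := specLE
      le_refl := specLE_refl
      le_trans := fun _ _ _ => specLE_trans
      le_antisymm := fun _ _ h1 h2 => antisymm h1 h2 }
  -- key: every x ∈ A is below some maximal element of A
  have key : ∀ x ∈ A, ∃ m, specLE x m ∧ m ∈ A ∧ ∀ b ∈ A, specLE m b → m = b := by
    intro x hx
    have hub : ∀ c ⊆ A, IsChain (· ≤ ·) c → ∀ y ∈ c, ∃ ub ∈ A, ∀ z ∈ c, z ≤ ub := by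
      intro c hcA hc y hy
      have hdir : dirOn c := by
        refine ⟨⟨y, hy⟩, fun a ha b hb => ?_⟩
        rcases hc.total ha hb with h | h
        · exact ⟨b, hb, h, specLE_refl b⟩
        · exact ⟨a, ha, specLE_refl a, h⟩
      obtain ⟨s, hs⟩ := hsup c hdir
      have hsA : s ∈ A := by
        by_contra hsA
        obtain ⟨d, hdc, hdU⟩ := hopen c hdir s hs Aᶜ hA.isOpen_compl hsA
        exact hdU (hcA hdc)
      exact ⟨s, hsA, fun z hz => hs.1 z hz⟩
    obtain ⟨m, hxm, hm⟩ := zorn_le_nonempty₀ A hub x hx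
    exact ⟨m, hxm, hm.1, fun b hb hmb => antisymm hmb (hm.2 hb hmb)⟩
  have hsub : dClo {a ∈ A | ∀ b ∈ A, specLE a b → a = b} ⊆ A := by
    rintro x ⟨a, ⟨haA, _⟩, hxa⟩
    have : closure ({a} : Set X) ⊆ A :=
      closure_minimal (Set.singleton_subset_iff.2 haA) hA
    exact this hxa
  obtain ⟨x₀, hx₀⟩ := hne
  obtain ⟨m, hxm, hmA, hmax⟩ := key x₀ hx₀
  refine ⟨⟨m, hmA, hmax⟩, Set.Subset.antisymm ?_ hsub⟩
  intro x hx
  obtain ⟨m', hxm', hm'A, hmax'⟩ := key x hx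
  exact ⟨m', ⟨hm'A, hmax'⟩, hxm'⟩
end

section
/- Let X be a d-space such that for every closed set A ⊆ X and every nonempty compact saturated set K ⊆ X, the downward closure ↓(A ∩ K) in the specialization order is closed. Then X is well-filtered. -/
/-!
If a filtered family `𝒦` of compact saturated sets had `⋂ 𝒦 ⊆ U` with no member inside `U`,
Zorn's lemma would give a minimal closed `A ⊆ Uᶜ` meeting every `K ∈ 𝒦` (by compactness the
intersection of a chain of such sets still meets each `K`). Since `𝒦` is filtered, `↓(A ∩ K)` is
again such a set, so `A = ↓(A ∩ K)`. In a d-space the closed set `A` has a maximal point `m`; it lies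
below a point of `A ∩ K`, which by maximality and T0 is `m` itself. So `m ∈ ⋂ 𝒦 \ U`.
-/

open Set Topology

universe u

variable {X : Type u}

section Specialization

variable [TopologicalSpace X]

theorem IsClosed.mem_of_specLE {B : Set X} (hB : IsClosed B) {x a : X} (ha : a ∈ B)
    (hxa : specLE x a) : x ∈ B :=
  closure_minimal (singleton_subset_iff.2 ha) hB hxa

theorem specLE_antisymm [T0Space X] {x y : X} (hxy : specLE x y) (hyx : specLE y x) : x = y :=
  ((specializes_iff_mem_closure.2 hyx).antisymm (specializes_iff_mem_closure.2 hxy)).eq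

theorem subset_dClo (A : Set X) : A ⊆ dClo A :=
  fun x hx => ⟨x, hx, subset_closure rfl⟩

theorem dClo_subset_of_isClosed {A B : Set X} (hB : IsClosed B) (hAB : A ⊆ B) : dClo A ⊆ B := by
  rintro x ⟨a, ha, hxa⟩
  exact hB.mem_of_specLE (hAB ha) hxa

/-- Not an instance: `X` may carry an unrelated order. -/
abbrev specPreorder (X : Type u) [TopologicalSpace X] : Preorder X where
  le := specLE
  le_refl _ := subset_closure rfl
  le_trans _ _ _ hxy hyz := closure_minimal (singleton_subset_iff.2 hyz) isClosed_closure hxy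

end Specialization

section DSpace

variable [TopologicalSpace X]

theorem IsDSpace.exists_isSupOf_mem {D A : Set X} (hX : IsDSpace X) (hD : dirOn D)
    (hA : IsClosed A) (hDA : D ⊆ A) : ∃ x ∈ A, IsSupOf D x := by
  obtain ⟨x, hx⟩ := hX.2.1 D hD
  refine ⟨x, by_contra fun hxA => ?_, hx⟩
  obtain ⟨d, hdD, hdA⟩ := hX.2.2 D hD x hx Aᶜ hA.isOpen_compl hxA
  exact hdA (hDA hdD)

theorem IsDSpace.exists_maximal_of_isClosed {A : Set X} (hX : IsDSpace X) (hA : IsClosed A)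
    (hne : A.Nonempty) : ∃ m ∈ A, ∀ a ∈ A, specLE m a → specLE a m := by
  let := specPreorder X
  obtain ⟨x₀, hx₀⟩ := hne
  have chain_bdd : ∀ c ⊆ A, IsChain (· ≤ ·) c → ∀ y ∈ c, ∃ ub ∈ A, ∀ z ∈ c, z ≤ ub := by
    intro c hcA hc y hy
    obtain ⟨ub, hubA, hub⟩ := hX.exists_isSupOf_mem ⟨⟨y, hy⟩, hc.directedOn⟩ hA hcA
    exact ⟨ub, hubA, hub.1⟩
  obtain ⟨m, -, hm⟩ := zorn_le_nonempty₀ A chain_bdd x₀ hx₀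
  exact ⟨m, hm.1, fun a ha => hm.2 ha⟩

end DSpace

section MinimalClosedSets

variable [TopologicalSpace X]

def closedMeeting (𝒦 : Set (Set X)) : Set (Set X) :=
  {B | IsClosed B ∧ ∀ K ∈ 𝒦, (K ∩ B).Nonempty}

theorem IsCompact.inter_sInter_nonempty_of_isChain {K : Set X} (hK : IsCompact K)
    {c : Set (Set X)} (hc : IsChain (· ⊆ ·) c) (hcne : c.Nonempty)
    (hcl : ∀ B ∈ c, IsClosed B) (hmeet : ∀ B ∈ c, (K ∩ B).Nonempty) :
    (K ∩ ⋂₀ c).Nonempty := by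
  have := hcne.to_subtype
  rw [nonempty_iff_ne_empty, sInter_eq_iInter]
  intro hempty
  have hdir : DirectedOn (· ⊇ ·) c := IsChain.directedOn (r := fun s t : Set X => s ⊇ t) hc.symm
  obtain ⟨B, hB⟩ := hK.elim_directed_family_closed (fun B : c => (B : Set X))
    (fun B => hcl B B.2) hempty (directedOn_iff_directed.1 hdir)
  exact (hmeet B B.2).ne_empty hB

theorem exists_minimal_closedMeeting {𝒦 : Set (Set X)} (h𝒦 : ∀ K ∈ 𝒦, IsCompact K)
    {C : Set X} (hC : C ∈ closedMeeting 𝒦) :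
    ∃ A ⊆ C, Minimal (· ∈ closedMeeting 𝒦) A := by
  refine zorn_superset_nonempty _ (fun c hcS hc hcne => ?_) C hC
  refine ⟨⋂₀ c, ⟨isClosed_sInter fun B hB => (hcS hB).1, fun K hK => ?_⟩,
    fun B hB => sInter_subset_of_mem hB⟩
  exact (h𝒦 K hK).inter_sInter_nonempty_of_isChain hc hcne (fun B hB => (hcS hB).1)
    fun B hB => (hcS hB).2 K hK

theorem Minimal.subset_dClo_inter {𝒦 : Set (Set X)} (hFilt : FiltFam 𝒦) {A K : Set X}
    (hA : Minimal (· ∈ closedMeeting 𝒦) A) (hK : K ∈ 𝒦) (hcl : IsClosed (dClo (A ∩ K))) :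
    A ⊆ dClo (A ∩ K) := by
  refine hA.2 ⟨hcl, fun K' hK' => ?_⟩ (dClo_subset_of_isClosed hA.1.1 inter_subset_left)
  obtain ⟨K₃, hK₃, hK₃K, hK₃K'⟩ := hFilt.2 K hK K' hK'
  obtain ⟨x, hxK₃, hxA⟩ := hA.1.2 K₃ hK₃
  exact ⟨x, hK₃K' hxK₃, subset_dClo _ ⟨hxA, hK₃K hxK₃⟩⟩

end MinimalClosedSets

/-- Xi–Lawson: a d-space in which `↓(A ∩ K)` is closed for every closed `A`
and every nonempty compact saturated `K` is well-filtered. -/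
theorem stmt1 {X : Type u} [TopologicalSpace X] (hX : IsDSpace X)
    (h : ∀ A K : Set X, IsClosed A → K ∈ KSet X → IsClosed (dClo (A ∩ K))) :
    IsWF X := by
  have := hX.1
  refine ⟨hX.1, fun 𝒦 h𝒦 hFilt U hU hsub => ?_⟩
  by_contra! hnot
  obtain ⟨A, hAU, hA⟩ := exists_minimal_closedMeeting (fun K hK => (h𝒦 hK).2.1)
    (C := Uᶜ) ⟨hU.isClosed_compl, fun K hK => inter_compl_nonempty_iff.2 (hnot K hK)⟩
  obtain ⟨K₀, hK₀⟩ := hFilt.1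
  obtain ⟨m, hmA, hmax⟩ :=
    hX.exists_maximal_of_isClosed hA.1.1 ((hA.1.2 K₀ hK₀).mono inter_subset_right)
  have hm𝒦 : ∀ K ∈ 𝒦, m ∈ K := by
    intro K hK
    obtain ⟨a, ⟨haA, haK⟩, hma⟩ :=
      hA.subset_dClo_inter hFilt hK (h A K hA.1.1 (h𝒦 hK)) hmA
    rwa [← specLE_antisymm (hmax a haA hma) hma]
  exact hAU hmA (hsub hm𝒦)
end

section
/- For a T0 space X, the following conditions are equivalent: (1) X is locally compact and sober; (2) X is locally compact and well-filtered; (3) X is core compact and sober; (4) X is core compact and well-filtered. -/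
open Set Topology

universe u

variable {X : Type u}

/-!
Sober ⇒ well-filtered is Rudin's argument: a minimal closed set meeting every member of a
filtered family of compact saturated sets is irreducible, and its generic point lies in all of
them. In a locally compact well-filtered space, the compact saturated neighbourhoods of points
of an irreducible closed set `A` form a filtered family whose intersection meets `A` in a
generic point.

The substantial step is core compact + well-filtered ⇒ locally compact. For `x ∈ V ≪ U`,
interpolation gives `U = W₀ ≫ W₁ ≫ ⋯ ⊇ V`, and `⋂ Wₙ` is a compact neighbourhood of `x` as soon
as every open set containing `⋂ Wₙ` contains some `Wₙ`. If an open `O` fails this, take a minimal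
closed set `B ⊆ Oᶜ` meeting every `Wₙ` and points `xₙ ∈ B ∩ Wₙ`: minimality of `B` makes every
tail `{xₘ | m ≥ j}` compact, and well-filteredness applied to the saturations of the tails gives a
point of `B ∩ ⋂ Wₙ`.
-/

section Saturation

variable [TopologicalSpace X]

def saturation (S : Set X) : Set X := ⋂₀ {U : Set X | IsOpen U ∧ S ⊆ U}

theorem subset_saturation (S : Set X) : S ⊆ saturation S := fun _ hx _ hU => hU.2 hx

theorem saturation_subset {S U : Set X} (hU : IsOpen U) (hSU : S ⊆ U) : saturation S ⊆ U :=
  fun _ hx => hx U ⟨hU, hSU⟩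

theorem saturation_mono {S T : Set X} (h : S ⊆ T) : saturation S ⊆ saturation T :=
  fun _ hx U hU => hx U ⟨hU.1, h.trans hU.2⟩

theorem isSat_saturation (S : Set X) : IsSat (saturation S) :=
  (subset_saturation _).antisymm fun _ hx U hU => hx U ⟨hU.1, saturation_subset hU.1 hU.2⟩

theorem IsCompact.saturation {S : Set X} (hS : IsCompact S) : IsCompact (saturation S) :=
  isCompact_of_finite_subcover fun U hUo hcov =>
    let ⟨t, ht⟩ := hS.elim_finite_subcover U hUo ((subset_saturation S).trans hcov)
    ⟨t, saturation_subset (isOpen_biUnion fun i _ => hUo i) ht⟩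

theorem IsSat.mem_of_specializes {K : Set X} (hK : IsSat K) {x y : X} (hxy : x ⤳ y)
    (hy : y ∈ K) : x ∈ K := by
  rw [hK]
  exact fun U hU => hxy.mem_open hU.1 (hU.2 hy)

end Saturation

section WayBelow

variable [TopologicalSpace X]

def DirectedWayBelow (V U : Set X) : Prop :=
  ∀ {ι : Type u} [Nonempty ι] (f : ι → Set X), (∀ i, IsOpen (f i)) → U ⊆ ⋃ i, f i →
    Directed (· ⊆ ·) f → ∃ i, V ⊆ f i

theorem isCompact_iff_directedWayBelow_self {K : Set X} :
    IsCompact K ↔ DirectedWayBelow K K :=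
  ⟨fun hK _ _ f hfo hcov hd => hK.elim_directed_cover f hfo hcov hd, fun hK =>
    isCompact_of_finite_subcover fun f hfo hcov =>
      hK (fun t : Finset _ => ⋃ i ∈ t, f i) (fun _ => isOpen_biUnion fun i _ => hfo i)
        (iUnion_eq_iUnion_finset f ▸ hcov)
        (directed_of_isDirected_le fun _ _ h => biUnion_subset_biUnion_left h)⟩

theorem wayBelow.subset {V U : Set X} (h : wayBelow V U) (hU : IsOpen U) : V ⊆ U := by
  obtain ⟨𝒟, h𝒟, -, hV⟩ := h {U} (by simpa using hU) (by simp)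
  exact hV.trans (sUnion_subset fun W hW => (h𝒟 hW).symm ▸ Subset.rfl)

theorem wayBelow.mono {V U V' U' : Set X} (h : wayBelow V U) (hV : V' ⊆ V) (hU : U ⊆ U') :
    wayBelow V' U' := fun 𝒞 h𝒞 hcov =>
  let ⟨𝒟, h𝒟, hfin, hV𝒟⟩ := h 𝒞 h𝒞 (hU.trans hcov)
  ⟨𝒟, h𝒟, hfin, hV.trans hV𝒟⟩

theorem wayBelow.union {V₁ V₂ U : Set X} (h₁ : wayBelow V₁ U) (h₂ : wayBelow V₂ U) :
    wayBelow (V₁ ∪ V₂) U := fun 𝒞 h𝒞 hcov => by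
  obtain ⟨𝒟₁, h𝒟₁, hfin₁, hV₁⟩ := h₁ 𝒞 h𝒞 hcov
  obtain ⟨𝒟₂, h𝒟₂, hfin₂, hV₂⟩ := h₂ 𝒞 h𝒞 hcov
  exact ⟨𝒟₁ ∪ 𝒟₂, union_subset h𝒟₁ h𝒟₂, hfin₁.union hfin₂,
    sUnion_union 𝒟₁ 𝒟₂ ▸ union_subset_union hV₁ hV₂⟩

theorem wayBelow.directedWayBelow {V U : Set X} (h : wayBelow V U) : DirectedWayBelow V U := by
  classical
  intro ι _ f hfo hcov hd
  obtain ⟨𝒟, h𝒟, hfin, hV⟩ := h (range f) (forall_mem_range.mpr hfo) (by rwa [sUnion_range])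
  obtain ⟨𝒟', rfl⟩ := hfin.exists_finset_coe
  obtain ⟨t, -, rfl⟩ := Finset.subset_set_image_iff.mp (image_univ (f := f) ▸ h𝒟)
  obtain ⟨i, hi⟩ := hd.finset_le t
  refine ⟨i, hV.trans (sUnion_subset fun _ h => ?_)⟩
  obtain ⟨a, ha, rfl⟩ := by simpa using h
  exact hi a ha

theorem wayBelow_of_subset_of_isCompact {V K U : Set X} (hK : IsCompact K) (hVK : V ⊆ K)
    (hKU : K ⊆ U) : wayBelow V U := fun 𝒞 h𝒞 hcov => by
  obtain ⟨𝒟, h𝒟, hfin, hK𝒟⟩ := hK.elim_finite_subcover_image (c := id) h𝒞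
    (by simpa [← sUnion_eq_biUnion] using hKU.trans hcov)
  exact ⟨𝒟, h𝒟, hfin, hVK.trans (by simpa [← sUnion_eq_biUnion] using hK𝒟)⟩

theorem antitone_of_wayBelow_succ {W : ℕ → Set X} (hWo : ∀ n, IsOpen (W n))
    (hW : ∀ n, wayBelow (W (n + 1)) (W n)) : Antitone W :=
  antitone_nat_of_succ_le fun n => (hW n).subset (hWo n)

theorem coreCompact_of_locallyCompactSpace [LocallyCompactSpace X] : CoreCompact X := by
  intro x U hU hxU
  obtain ⟨K, hK, hKU, hKc⟩ := local_compact_nhds (hU.mem_nhds hxU)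
  exact ⟨interior K, isOpen_interior, mem_interior_iff_mem_nhds.mpr hK,
    wayBelow_of_subset_of_isCompact hKc interior_subset hKU⟩

theorem CoreCompact.exists_wayBelow_wayBelow (hX : CoreCompact X) {V U : Set X}
    (hU : IsOpen U) (hVU : wayBelow V U) : ∃ W, IsOpen W ∧ wayBelow V W ∧ wayBelow W U := by
  let ι := {p : Set X × Set X // IsOpen p.1 ∧ IsOpen p.2 ∧ wayBelow p.1 p.2 ∧ wayBelow p.2 U}
  have hempty : ∀ U : Set X, wayBelow ∅ U := fun _ _ _ _ =>
    ⟨∅, empty_subset _, finite_empty, empty_subset _⟩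
  have : Nonempty ι := ⟨⟨(∅, ∅), isOpen_empty, isOpen_empty, hempty _, hempty _⟩⟩
  have hcov : U ⊆ ⋃ p : ι, p.1.1 := fun u hu => by
    obtain ⟨W, hWo, huW, hWU⟩ := hX u U hU hu
    obtain ⟨O, hOo, huO, hOW⟩ := hX u W hWo huW
    exact mem_iUnion.mpr ⟨⟨(O, W), hOo, hWo, hOW, hWU⟩, huO⟩
  have hd : Directed (· ⊆ ·) fun p : ι => p.1.1 := fun p q =>
    ⟨⟨(p.1.1 ∪ q.1.1, p.1.2 ∪ q.1.2), p.2.1.union q.2.1, p.2.2.1.union q.2.2.1,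
      (p.2.2.2.1.mono Subset.rfl subset_union_left).union
        (q.2.2.2.1.mono Subset.rfl subset_union_right),
      p.2.2.2.2.union q.2.2.2.2⟩, subset_union_left, subset_union_right⟩
  obtain ⟨⟨⟨O, W⟩, _, hWo, hOW, hWU⟩, hVO⟩ :=
    hVU.directedWayBelow _ (fun p => p.2.1) hcov hd
  exact ⟨W, hWo, hOW.mono hVO Subset.rfl, hWU⟩

theorem CoreCompact.exists_wayBelow_seq (hX : CoreCompact X) {V U : Set X} (hU : IsOpen U)
    (hVU : wayBelow V U) : ∃ W : ℕ → Set X, W 0 = U ∧ (∀ n, IsOpen (W n)) ∧ (∀ n, V ⊆ W n) ∧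
      ∀ n, wayBelow (W (n + 1)) (W n) := by
  let P : Set X → Prop := fun W => IsOpen W ∧ wayBelow V W
  have step : ∀ W : Subtype P, ∃ W' : Subtype P, wayBelow W'.1 W.1 := fun ⟨_, hWo, hVW⟩ =>
    let ⟨W', hW'o, hVW', hW'W⟩ := hX.exists_wayBelow_wayBelow hWo hVW
    ⟨⟨W', hW'o, hVW'⟩, hW'W⟩
  choose next hnext using step
  let W : ℕ → Subtype P := fun n => next^[n] ⟨U, hU, hVU⟩
  refine ⟨fun n => (W n).1, rfl, fun n => (W n).2.1, fun n => (W n).2.2.subset (W n).2.1,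
    fun n => ?_⟩
  simp only [W, Function.iterate_succ_apply']
  exact hnext _

end WayBelow

section MinimalClosed

variable [TopologicalSpace X]

def ClosedMeetsAll (𝒮 : Set (Set X)) (C : Set X) : Prop :=
  IsClosed C ∧ ∀ S ∈ 𝒮, (C ∩ S).Nonempty

theorem exists_minimal_closedMeetsAll {𝒮 : Set (Set X)}
    (h𝒮 : ∀ S ∈ 𝒮, ∃ T ∈ 𝒮, DirectedWayBelow T S) {A : Set X} (hA : ClosedMeetsAll 𝒮 A) :
    ∃ B ⊆ A, Minimal (ClosedMeetsAll 𝒮) B := by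
  refine zorn_superset_nonempty {C | ClosedMeetsAll 𝒮 C} (fun c hc hchain hcne => ?_) A hA
  refine ⟨⋂₀ c, ⟨isClosed_sInter fun C hC => (hc hC).1, fun S hS => ?_⟩,
    fun _ => sInter_subset_of_mem⟩
  by_contra hempty
  obtain ⟨T, hT, hTS⟩ := h𝒮 S hS
  have := hcne.to_subtype
  have hcov : S ⊆ ⋃ C : c, (C : Set X)ᶜ := fun x hxS => by
    have hx : x ∉ ⋂₀ c := fun hx => hempty ⟨x, hx, hxS⟩
    simp only [mem_sInter, not_forall] at hx
    obtain ⟨C, hC, hxC⟩ := hx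
    exact mem_iUnion.mpr ⟨⟨C, hC⟩, hxC⟩
  obtain ⟨⟨C, hC⟩, hTC⟩ := hTS _ (fun C => (hc C.2).1.isOpen_compl) hcov
    (hchain.symm.mono_rel fun _ _ h => compl_subset_compl.mpr h).directed
  obtain ⟨y, hyC, hyT⟩ := (hc hC).2 T hT
  exact hTC hyT hyC

theorem Minimal.isIrreducible_of_closedMeetsAll {𝒮 : Set (Set X)} (h𝒮 : FiltFam 𝒮) {B : Set X}
    (hB : Minimal (ClosedMeetsAll 𝒮) B) : IsIrreducible B := by
  obtain ⟨S, hS⟩ := h𝒮.1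
  refine ⟨(hB.1.2 S hS).mono inter_subset_left,
    isPreirreducible_iff_isClosed_union_isClosed.mpr fun Z₁ Z₂ hZ₁ hZ₂ hB₁₂ => ?_⟩
  by_contra! hB'
  have hmiss : ∀ Z, IsClosed Z → ¬ B ⊆ Z → ∃ S ∈ 𝒮, ∀ x ∈ B ∩ S, x ∉ Z := fun Z hZ hBZ => by
    by_contra! h
    refine hBZ (hB.eq_of_le ⟨hB.1.1.inter hZ, fun S hS => ?_⟩ inter_subset_left ▸ inter_subset_right)
    obtain ⟨x, ⟨hxB, hxS⟩, hxZ⟩ := h S hS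
    exact ⟨x, ⟨hxB, hxZ⟩, hxS⟩
  obtain ⟨S₁, hS₁, h₁⟩ := hmiss Z₁ hZ₁ hB'.1
  obtain ⟨S₂, hS₂, h₂⟩ := hmiss Z₂ hZ₂ hB'.2
  obtain ⟨S₃, hS₃, h₃₁, h₃₂⟩ := h𝒮.2 S₁ hS₁ S₂ hS₂
  obtain ⟨x, hxB, hxS₃⟩ := hB.1.2 S₃ hS₃
  exact (hB₁₂ hxB).elim (h₁ x ⟨hxB, h₃₁ hxS₃⟩) (h₂ x ⟨hxB, h₃₂ hxS₃⟩)

end MinimalClosed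

section WellFiltered

variable [TopologicalSpace X]

theorem IsSober.t0Space (hX : IsSober X) : T0Space X :=
  (t0Space_iff_inseparable X).mpr fun _ _ hxy =>
    (hX _ isIrreducible_singleton.closure isClosed_closure).unique rfl
      (inseparable_iff_closure_eq.mp hxy)

theorem IsSober.isWF (hX : IsSober X) : IsWF X := by
  refine ⟨hX.t0Space, fun 𝒦 h𝒦 hfilt U hU h𝒦U => ?_⟩
  by_contra! hK
  have hUc : ClosedMeetsAll 𝒦 Uᶜ := ⟨hU.isClosed_compl, fun K hK' => by
    rw [inter_comm, ← sdiff_eq]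
    exact sdiff_nonempty.mpr (hK K hK')⟩
  obtain ⟨B, hBU, hB⟩ :=
    exists_minimal_closedMeetsAll (fun K hK' => ⟨K, hK', isCompact_iff_directedWayBelow_self.mp
      (h𝒦 hK').2.1⟩) hUc
  obtain ⟨x, hBx, -⟩ := hX B (hB.isIrreducible_of_closedMeetsAll hfilt) hB.1.1
  have hx𝒦 : x ∈ ⋂₀ 𝒦 := fun K hK' => by
    obtain ⟨y, hyB, hyK⟩ := hB.1.2 K hK'
    exact (h𝒦 hK').2.2.mem_of_specializes (specializes_iff_mem_closure.mpr (hBx ▸ hyB)) hyK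
  exact hBU (hBx ▸ subset_closure rfl) (h𝒦U hx𝒦)

theorem isCompact_image_Ici_of_minimal {W : ℕ → Set X} (hWo : ∀ n, IsOpen (W n))
    (hW : ∀ n, wayBelow (W (n + 1)) (W n)) {B : Set X} (hB : Minimal (ClosedMeetsAll (range W)) B)
    {x : ℕ → X} (hx : ∀ n, x n ∈ B ∩ W n) (j : ℕ) : IsCompact (x '' Ici j) := by
  classical
  refine isCompact_iff_directedWayBelow_self.mpr fun {ι} _ U hUo hcov hd => ?_
  have hxU : x j ∈ ⋃ i, U i := hcov (mem_image_of_mem x self_mem_Ici)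
  -- otherwise `B \ ⋃ i, U i` would be a smaller closed set meeting every `W n`
  obtain ⟨k, hk⟩ : ∃ k, B ∩ W k ⊆ ⋃ i, U i := by
    by_contra! h
    have hBU : ClosedMeetsAll (range W) (B \ ⋃ i, U i) :=
      ⟨hB.1.1.sdiff (isOpen_iUnion hUo), forall_mem_range.mpr fun n => by
        obtain ⟨y, ⟨hyB, hyW⟩, hyU⟩ := not_subset.mp (h n)
        exact ⟨y, ⟨hyB, hyU⟩, hyW⟩⟩
    have hxj : x j ∈ B \ ⋃ i, U i := by
      rw [hB.eq_of_le hBU sdiff_subset]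
      exact (hx j).1
    exact hxj.2 hxU
  obtain ⟨i₁, hi₁⟩ := (hW k).directedWayBelow (fun i => Bᶜ ∪ U i)
    (fun i => hB.1.1.isOpen_compl.union (hUo i))
    (fun y hy => by
      by_cases hyB : y ∈ B
      · obtain ⟨i, hi⟩ := mem_iUnion.mp (hk ⟨hyB, hy⟩)
        exact mem_iUnion.mpr ⟨i, Or.inr hi⟩
      · exact mem_iUnion.mpr ⟨Classical.arbitrary ι, Or.inl hyB⟩)
    (fun a b => let ⟨c, ha, hb⟩ := hd a b
      ⟨c, union_subset_union_right _ ha, union_subset_union_right _ hb⟩)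
  obtain ⟨i₂, hi₂⟩ := hd.exists_mem_subset_of_finset_subset_biUnion
    (s := (Finset.Icc j k).image x) fun y hy => hcov <| by
      obtain ⟨m, hm, rfl⟩ := by simpa using hy
      exact mem_image_of_mem x hm.1
  obtain ⟨i, h₁, h₂⟩ := hd i₁ i₂
  refine ⟨i, ?_⟩
  rintro _ ⟨m, hm, rfl⟩
  rcases le_or_gt m k with hmk | hmk
  · exact h₂ (hi₂ (by simpa using ⟨m, ⟨hm, hmk⟩, rfl⟩))
  · have hxm := hi₁ (antitone_of_wayBelow_succ hWo hW hmk (hx m).2)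
    exact h₁ (hxm.resolve_left (not_not.mpr (hx m).1))

theorem IsWF.exists_subset_of_iInter_subset (hX : IsWF X) {W : ℕ → Set X}
    (hWo : ∀ n, IsOpen (W n)) (hW : ∀ n, wayBelow (W (n + 1)) (W n)) {U : Set X}
    (hU : IsOpen U) (hWU : ⋂ n, W n ⊆ U) : ∃ n, W n ⊆ U := by
  by_contra! hWU'
  have hUc : ClosedMeetsAll (range W) Uᶜ := ⟨hU.isClosed_compl, forall_mem_range.mpr fun n => by
    rw [inter_comm, ← sdiff_eq]
    exact sdiff_nonempty.mpr (hWU' n)⟩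
  obtain ⟨B, hBU, hB⟩ := exists_minimal_closedMeetsAll
    (forall_mem_range.mpr fun n => ⟨W (n + 1), mem_range_self _, (hW n).directedWayBelow⟩) hUc
  choose x hx using forall_mem_range.mp hB.1.2
  let K : ℕ → Set X := fun j => saturation (x '' Ici j)
  have hxK : ∀ j, x j ∈ K j := fun j => subset_saturation _ (mem_image_of_mem x self_mem_Ici)
  have hK : range K ⊆ KSet X := forall_mem_range.mpr fun j =>
    ⟨⟨x j, hxK j⟩, (isCompact_image_Ici_of_minimal hWo hW hB hx j).saturation,
      isSat_saturation _⟩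
  have hKfilt : FiltFam (range K) := ⟨range_nonempty K, forall_mem_range.mpr fun j₁ =>
    forall_mem_range.mpr fun j₂ => ⟨K (max j₁ j₂), mem_range_self _,
      saturation_mono (image_mono (Ici_subset_Ici.mpr (le_max_left _ _))),
      saturation_mono (image_mono (Ici_subset_Ici.mpr (le_max_right _ _)))⟩⟩
  obtain ⟨y, hyK, hyB⟩ : ∃ y ∈ ⋂₀ range K, y ∈ B := by
    by_contra! h
    obtain ⟨_, ⟨j, rfl⟩, hKj⟩ := hX.2 _ hK hKfilt _ hB.1.1.isOpen_compl h
    exact hKj (hxK j) (hx j).1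
  have hyW : y ∈ ⋂ n, W n := mem_iInter.mpr fun n =>
    saturation_subset (hWo n) (by
      rintro _ ⟨m, hm, rfl⟩
      exact antitone_of_wayBelow_succ hWo hW hm (hx m).2) (hyK (K n) (mem_range_self n))
  exact hBU hyB (hWU hyW)

theorem IsWF.isCompact_iInter_of_wayBelow (hX : IsWF X) {W : ℕ → Set X}
    (hWo : ∀ n, IsOpen (W n)) (hW : ∀ n, wayBelow (W (n + 1)) (W n)) :
    IsCompact (⋂ n, W n) :=
  isCompact_iff_directedWayBelow_self.mpr fun f hfo hcov hd => by
    obtain ⟨n, hn⟩ := hX.exists_subset_of_iInter_subset hWo hW (isOpen_iUnion hfo) hcov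
    obtain ⟨i, hi⟩ := (hW n).directedWayBelow f hfo hn hd
    exact ⟨i, (iInter_subset _ _).trans hi⟩

theorem IsWF.locallyCompactSpace (hX : IsWF X) (hcc : CoreCompact X) : LocallyCompactSpace X := by
  refine ⟨fun x n hn => ?_⟩
  obtain ⟨U, hUn, hUo, hxU⟩ := mem_nhds_iff.mp hn
  obtain ⟨V, hVo, hxV, hVU⟩ := hcc x U hUo hxU
  obtain ⟨W, rfl, hWo, hVW, hW⟩ := hcc.exists_wayBelow_seq hUo hVU
  exact ⟨⋂ n, W n, Filter.mem_of_superset (hVo.mem_nhds hxV) (subset_iInter hVW),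
    (iInter_subset _ 0).trans hUn, hX.isCompact_iInter_of_wayBelow hWo hW⟩

theorem exists_mem_KSet_mem_interior_subset [LocallyCompactSpace X] {U : Set X} (hU : IsOpen U)
    {a : X} (ha : a ∈ U) : ∃ K ∈ KSet X, a ∈ interior K ∧ K ⊆ U := by
  obtain ⟨s, hs, hsU, hsc⟩ := local_compact_nhds (hU.mem_nhds ha)
  exact ⟨saturation s, ⟨⟨a, subset_saturation s (mem_of_mem_nhds hs)⟩, hsc.saturation,
    isSat_saturation s⟩, interior_mono (subset_saturation s) (mem_interior_iff_mem_nhds.mpr hs),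
    saturation_subset hU hsU⟩

theorem IsWF.isSober [LocallyCompactSpace X] (hX : IsWF X) : IsSober X := by
  have := hX.1
  intro A hA hAc
  let 𝒦 := {K ∈ KSet X | (A ∩ interior K).Nonempty}
  have hfilt : FiltFam 𝒦 := by
    refine ⟨?_, fun K₁ hK₁ K₂ hK₂ => ?_⟩
    · obtain ⟨a, ha⟩ := hA.nonempty
      obtain ⟨K, hK, haK, -⟩ := exists_mem_KSet_mem_interior_subset isOpen_univ (mem_univ a)
      exact ⟨K, hK, a, ha, haK⟩
    · obtain ⟨a, haA, ha₁, ha₂⟩ :=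
        hA.isPreirreducible _ _ isOpen_interior isOpen_interior hK₁.2 hK₂.2
      obtain ⟨K, hK, haK, hKsub⟩ :=
        exists_mem_KSet_mem_interior_subset (isOpen_interior.inter isOpen_interior) ⟨ha₁, ha₂⟩
      exact ⟨K, ⟨hK, a, haA, haK⟩, hKsub.trans (inter_subset_left.trans interior_subset),
        hKsub.trans (inter_subset_right.trans interior_subset)⟩
  obtain ⟨x, hx𝒦, hxA⟩ : ∃ x ∈ ⋂₀ 𝒦, x ∈ A := by
    by_contra! h
    obtain ⟨K, ⟨-, a, haA, haK⟩, hKA⟩ := hX.2 𝒦 (fun K hK => hK.1) hfilt Aᶜ hAc.isOpen_compl h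
    exact hKA (interior_subset haK) haA
  have hAx : A = closure {x} := (closure_minimal (singleton_subset_iff.mpr hxA) hAc).antisymm'
    fun a ha => mem_closure_iff.mpr fun O hO haO => by
      obtain ⟨K, hK, haK, hKO⟩ := exists_mem_KSet_mem_interior_subset hO haO
      exact ⟨x, hKO (hx𝒦 K ⟨hK, a, ha, haK⟩), rfl⟩
  exact ⟨x, hAx, fun y hy => (inseparable_iff_closure_eq.mpr (hy.symm.trans hAx)).eq⟩

end WellFiltered

theorem stmt4_general {X : Type u} [TopologicalSpace X] :
    List.TFAE [LocallyCompactSpace X ∧ IsSober X,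
      LocallyCompactSpace X ∧ IsWF X,
      CoreCompact X ∧ IsSober X,
      CoreCompact X ∧ IsWF X] := by
  tfae_have 1 → 2 := fun ⟨hlc, hs⟩ => ⟨hlc, hs.isWF⟩
  tfae_have 2 → 1 := fun ⟨hlc, hw⟩ => ⟨hlc, hw.isSober⟩
  tfae_have 2 → 4 := fun ⟨_, hw⟩ => ⟨coreCompact_of_locallyCompactSpace, hw⟩
  tfae_have 4 → 2 := fun ⟨hcc, hw⟩ => ⟨hw.locallyCompactSpace hcc, hw⟩
  tfae_have 1 → 3 := fun ⟨_, hs⟩ => ⟨coreCompact_of_locallyCompactSpace, hs⟩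
  tfae_have 3 → 4 := fun ⟨hcc, hs⟩ => ⟨hcc, hs.isWF⟩
  tfae_finish

/-- for a T0 space, the four conditions (locally compact + sober,
locally compact + well-filtered, core compact + sober, core compact + well-filtered)
are equivalent. -/
theorem stmt4 {X : Type u} [TopologicalSpace X] [T0Space X] :
    List.TFAE [LocallyCompactSpace X ∧ IsSober X,
      LocallyCompactSpace X ∧ IsWF X,
      CoreCompact X ∧ IsSober X,
      CoreCompact X ∧ IsWF X] :=
  stmt4_general
end

section
/- (Rudin's Lemma) Let P be a poset, C a nonempty lower subset of P, and ℱ a family of sets of the form ↑F with F a nonempty finite subset of P, such that ℱ is filtered under reverse inclusion (every two members of ℱ contain a common member of ℱ) and every member of ℱ meets C. Then there exists a directed subset D of C such that every member of ℱ meets ↓D. -/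
open Set

universe u

/-!
Replacing each member `↑F` of `ℱ` by `↑(F ∩ C)`, which has the same trace on the lower set `C`,
reduces the theorem to the classical form of Rudin's lemma: a family of nonempty finite sets `Fᵢ`
whose upper closures are filtered admits a directed `D ⊆ ⋃ Fᵢ` meeting every `Fᵢ`.

For that, apply Zorn's lemma (downwards) to the sets `M ⊆ ⋃ Fᵢ` that meet every `Fᵢ` and such that
every `m ∈ M` lying in `↑Fᵢ` lies above some element of `M ∩ Fᵢ`; finiteness of the `Fᵢ` lets both
conditions pass to intersections of chains. If `M` is minimal and `x ∈ M`, then `M \ ↑x` is not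
admissible, so `M ∩ Fᵢ ⊆ ↑x` for some `i`, and the second condition propagates this to every `Fₖ`
with `↑Fₖ ⊆ ↑Fᵢ`. Given `x, y ∈ M`, any element of `M ∩ Fₖ` for a common refinement `Fₖ` is then an
upper bound of `x` and `y` in `M`.
-/

theorem IsChain.sInter_inter_nonempty_of_finite {α : Type*} {c : Set (Set α)}
    (hc : IsChain (· ⊆ ·) c) (hne : c.Nonempty) {K : Set α} (hK : K.Finite)
    (h : ∀ M ∈ c, (M ∩ K).Nonempty) : (⋂₀ c ∩ K).Nonempty := by
  by_contra hempty
  have hcover : K ⊆ ⋃₀ (compl '' c) := fun x hxK => by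
    have hx : x ∉ ⋂₀ c := fun hx => hempty ⟨x, hx, hxK⟩
    obtain ⟨M, hM, hxM⟩ : ∃ M ∈ c, x ∉ M := by
      simpa only [mem_sInter, not_forall, exists_prop] using hx
    exact ⟨Mᶜ, mem_image_of_mem _ hM, hxM⟩
  have hdir : DirectedOn (· ⊆ ·) (compl '' c) :=
    (hc.symm.image_of_map_rel (fun s t : Set α => t ⊆ s) (· ⊆ ·) compl
      fun _ _ => compl_subset_compl.2).directedOn
  obtain ⟨_, ⟨M, hM, rfl⟩, hKM⟩ :=
    hdir.exists_mem_subset_of_finite_of_subset_sUnion (hne.image _) hK hcover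
  obtain ⟨a, haM, haK⟩ := h M hM
  exact hKM haK haM

theorem IsLowerSet.upperClosure_inter_subset {P : Type*} [Preorder P] {C : Set P}
    (hC : IsLowerSet C) (s : Set P) : ↑(upperClosure s) ∩ C ⊆ upperClosure (s ∩ C) :=
  fun _ ⟨⟨a, ha, hax⟩, hxC⟩ => ⟨a, ⟨ha, hC hax hxC⟩, hax⟩

section Rudin

variable {P ι : Type*} [Preorder P] (F : ι → Set P)

structure IsRudinSet (M : Set P) : Prop where
  inter_nonempty : ∀ i, (M ∩ F i).Nonempty
  exists_le_of_mem_upperClosure : ∀ m ∈ M, ∀ i, m ∈ upperClosure (F i) → ∃ a ∈ M ∩ F i, a ≤ m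

variable {F}

theorem isRudinSet_iUnion (hne : ∀ i, (F i).Nonempty) : IsRudinSet F (⋃ i, F i) where
  inter_nonempty i :=
    let ⟨a, ha⟩ := hne i
    ⟨a, mem_iUnion_of_mem i ha, ha⟩
  exists_le_of_mem_upperClosure _ _ i := fun ⟨a, ha, ham⟩ => ⟨a, ⟨mem_iUnion_of_mem i ha, ha⟩, ham⟩

theorem IsRudinSet.sInter (hfin : ∀ i, (F i).Finite) {c : Set (Set P)}
    (hcR : ∀ M ∈ c, IsRudinSet F M) (hc : IsChain (· ⊆ ·) c) (hne : c.Nonempty) :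
    IsRudinSet F (⋂₀ c) where
  inter_nonempty i :=
    hc.sInter_inter_nonempty_of_finite hne (hfin i) fun M hM => (hcR M hM).inter_nonempty i
  exists_le_of_mem_upperClosure m hm i hmi := by
    obtain ⟨a, ha, haF, ham⟩ :=
      hc.sInter_inter_nonempty_of_finite hne ((hfin i).sep (· ≤ m)) fun M hM => by
        obtain ⟨a, ⟨haM, haF⟩, ham⟩ :=
          (hcR M hM).exists_le_of_mem_upperClosure m (mem_sInter.1 hm M hM) i hmi
        exact ⟨a, haM, haF, ham⟩
    exact ⟨a, ⟨ha, haF⟩, ham⟩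

theorem exists_minimal_isRudinSet (hfin : ∀ i, (F i).Finite) (hne : ∀ i, (F i).Nonempty) :
    ∃ M ⊆ ⋃ i, F i, Minimal (IsRudinSet F) M :=
  zorn_superset_nonempty {M | IsRudinSet F M}
    (fun c hcR hc hcne => ⟨⋂₀ c, IsRudinSet.sInter hfin hcR hc hcne, fun _ => sInter_subset_of_mem⟩)
    _ (isRudinSet_iUnion hne)

theorem IsRudinSet.exists_inter_subset_Ici_of_minimal {M : Set P}
    (hM : Minimal (IsRudinSet F) M) {x : P} (hx : x ∈ M) : ∃ i, M ∩ F i ⊆ Ici x := by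
  by_contra! hcon
  have hM' : IsRudinSet F (M \ Ici x) := by
    refine ⟨fun i => ?_, fun m hm i hmi => ?_⟩
    · obtain ⟨a, ⟨haM, haF⟩, hxa⟩ := not_subset.1 (hcon i)
      exact ⟨a, ⟨haM, hxa⟩, haF⟩
    · obtain ⟨a, ⟨haM, haF⟩, ham⟩ := hM.prop.exists_le_of_mem_upperClosure m hm.1 i hmi
      exact ⟨a, ⟨⟨haM, fun hxa => hm.2 (le_trans hxa ham)⟩, haF⟩, ham⟩
  exact (hM.le_of_le hM' sdiff_subset hx).2 le_rfl

theorem IsRudinSet.inter_subset_Ici_of_subset_upperClosure {M : Set P} (hM : IsRudinSet F M)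
    {i k : ι} {x : P} (hx : M ∩ F i ⊆ Ici x) (hki : F k ⊆ upperClosure (F i)) :
    M ∩ F k ⊆ Ici x := fun m ⟨hmM, hmF⟩ =>
  let ⟨_, ha, ham⟩ := hM.exists_le_of_mem_upperClosure m hmM i (hki hmF)
  le_trans (hx ha) ham

theorem IsRudinSet.directedOn_of_minimal
    (hfilt : ∀ i j, ∃ k, F k ⊆ upperClosure (F i) ∧ F k ⊆ upperClosure (F j))
    {M : Set P} (hM : Minimal (IsRudinSet F) M) : DirectedOn (· ≤ ·) M := by
  intro x hx y hy
  obtain ⟨i, hi⟩ := exists_inter_subset_Ici_of_minimal hM hx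
  obtain ⟨j, hj⟩ := exists_inter_subset_Ici_of_minimal hM hy
  obtain ⟨k, hki, hkj⟩ := hfilt i j
  obtain ⟨z, hz⟩ := hM.prop.inter_nonempty k
  exact ⟨z, hz.1, hM.prop.inter_subset_Ici_of_subset_upperClosure hi hki hz,
    hM.prop.inter_subset_Ici_of_subset_upperClosure hj hkj hz⟩

theorem exists_directedOn_subset_iUnion_inter_nonempty (hfin : ∀ i, (F i).Finite)
    (hne : ∀ i, (F i).Nonempty)
    (hfilt : ∀ i j, ∃ k, F k ⊆ upperClosure (F i) ∧ F k ⊆ upperClosure (F j)) :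
    ∃ D ⊆ ⋃ i, F i, DirectedOn (· ≤ ·) D ∧ ∀ i, (D ∩ F i).Nonempty :=
  let ⟨M, hMsub, hM⟩ := exists_minimal_isRudinSet hfin hne
  ⟨M, hMsub, IsRudinSet.directedOn_of_minimal hfilt hM, hM.prop.inter_nonempty⟩

end Rudin

/-- Rudin's Lemma: if `C` is a nonempty lower subset of a poset `P` and
`ℱ` is a family of upper sets of nonempty finite sets that is filtered under reverse
inclusion and all of whose members meet `C`, then there is a directed `D ⊆ C` such that
every member of `ℱ` meets `↓D`. -/
theorem stmt5 {P : Type u} [PartialOrder P] (C : Set P) (hCne : C.Nonempty)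
    (hClow : IsLowerSet C) (ℱ : Set (Set P))
    (hform : ∀ S ∈ ℱ, ∃ F : Finset P, F.Nonempty ∧ S = {x | ∃ a ∈ F, a ≤ x})
    (hfilt : ∀ S₁ ∈ ℱ, ∀ S₂ ∈ ℱ, ∃ S₃ ∈ ℱ, S₃ ⊆ S₁ ∧ S₃ ⊆ S₂)
    (hmeet : ∀ S ∈ ℱ, (S ∩ C).Nonempty) :
    ∃ D ⊆ C, D.Nonempty ∧ DirectedOn (· ≤ ·) D ∧
      ∀ S ∈ ℱ, (S ∩ {x | ∃ d ∈ D, x ≤ d}).Nonempty := by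
  obtain rfl | ⟨S₀, hS₀⟩ := ℱ.eq_empty_or_nonempty
  · obtain ⟨c, hc⟩ := hCne
    exact ⟨{c}, singleton_subset_iff.2 hc, singleton_nonempty c, directedOn_singleton c, by simp⟩
  choose F _ hFS using hform
  let G : ℱ → Set P := fun S => ↑(F S S.2) ∩ C
  have hGS : ∀ S : ℱ, G S ⊆ S := fun S =>
    (hFS S S.2).symm ▸ inter_subset_left.trans subset_upperClosure
  have hSG : ∀ S : ℱ, (S : Set P) ∩ C ⊆ upperClosure (G S) := fun S =>
    (hFS S S.2).symm ▸ hClow.upperClosure_inter_subset _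
  have hGfin : ∀ S : ℱ, (G S).Finite := fun S => (F S S.2).finite_toSet.inter_of_left C
  have hGne : ∀ S : ℱ, (G S).Nonempty := fun S =>
    let ⟨a, ha, _⟩ := hSG S (hmeet S S.2).some_mem
    ⟨a, ha⟩
  have hGfilt : ∀ S T : ℱ, ∃ U : ℱ, G U ⊆ upperClosure (G S) ∧ G U ⊆ upperClosure (G T) :=
    fun S T =>
      let ⟨U, hU, hUS, hUT⟩ := hfilt S S.2 T T.2
      ⟨⟨U, hU⟩, fun _ ha => hSG S ⟨hUS (hGS _ ha), ha.2⟩, fun _ ha => hSG T ⟨hUT (hGS _ ha), ha.2⟩⟩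
  obtain ⟨D, hDG, hD, hDmeet⟩ := exists_directedOn_subset_iUnion_inter_nonempty hGfin hGne hGfilt
  refine ⟨D, hDG.trans (iUnion_subset fun _ => inter_subset_right),
    (hDmeet ⟨S₀, hS₀⟩).mono inter_subset_left, hD, fun S hS => ?_⟩
  obtain ⟨d, hdD, hdG⟩ := hDmeet ⟨S, hS⟩
  exact ⟨d, hGS _ hdG, d, hdD, le_rfl⟩
end

section
/- (Topological Rudin's Lemma) Let X be a topological space and 𝒜 ⊆ K(X) a subset that is irreducible as a subset of the Smyth power space P_S(X). Then every closed set C ⊆ X that meets every member of 𝒜 contains an irreducible closed subset A that is minimal (under set inclusion) among the closed subsets of X meeting every member of 𝒜. -/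
open Set Topology

universe u

variable {X : Type u}

/-- Topological Rudin's Lemma: if `𝒜 ⊆ K(X)` is irreducible in the Smyth
power space, then every closed set `C` meeting all members of `𝒜` contains a minimal
irreducible closed set still meeting all members of `𝒜`. -/
theorem stmt6 {X : Type u} [TopologicalSpace X] (𝒜 : Set (KS X))
    (h𝒜 : IsIrreducible 𝒜) (C : Set X) (hC : IsClosed C)
    (hmeet : ∀ K ∈ 𝒜, ((K : Set X) ∩ C).Nonempty) :
    ∃ A ⊆ C, IsClosed A ∧ IsIrreducible A ∧
      (∀ K ∈ 𝒜, ((K : Set X) ∩ A).Nonempty) ∧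
      ∀ B ⊆ A, IsClosed B → (∀ K ∈ 𝒜, ((K : Set X) ∩ B).Nonempty) → B = A := by
  set S : Set (Set X) :=
    {B | B ⊆ C ∧ IsClosed B ∧ ∀ K ∈ 𝒜, ((K : Set X) ∩ B).Nonempty} with hS
  obtain ⟨A, hAC, hAmem, hAmin⟩ : ∃ A, A ⊆ C ∧ A ∈ S ∧ ∀ B ∈ S, B ⊆ A → B = A := by
    obtain ⟨A, hAC, hAmin⟩ := zorn_superset_nonempty S (fun c hcS hchain hcne => by
      refine ⟨⋂₀ c, ⟨?_, ?_, ?_⟩, fun s hs => sInter_subset_of_mem hs⟩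
      · obtain ⟨s, hs⟩ := hcne
        exact (sInter_subset_of_mem hs).trans (hcS hs).1
      · exact isClosed_sInter fun s hs => (hcS hs).2.1
      · intro K hK
        have : Nonempty c := hcne.to_subtype
        by_contra hemp
        rw [not_nonempty_iff_eq_empty] at hemp
        have : (K : Set X) ∩ ⋂ s : c, (s : Set X) = ∅ := by
          rw [← hemp]; congr 1; exact (sInter_eq_iInter).symm ▸ rfl
        obtain ⟨s, hs⟩ := K.2.2.1.elim_directed_family_closed
          (fun s : c => (s : Set X)) (fun s => (hcS s.2).2.1)
          (by rw [← sInter_eq_iInter] at this ⊢; exact this)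
          (fun s t => by
            rcases hchain.total s.2 t.2 with h | h
            · exact ⟨s, subset_rfl, h⟩
            · exact ⟨t, h, subset_rfl⟩)
        exact absurd hs (nonempty_iff_ne_empty.1 ((hcS s.2).2.2 K hK))) C ⟨subset_rfl, hC, hmeet⟩
    exact ⟨A, hAC, hAmin.1, fun B hB hBA => hAmin.eq_of_subset hB hBA⟩
  obtain ⟨hAC', hAcl, hAmeet⟩ := hAmem
  refine ⟨A, hAC, hAcl, ⟨?_, ?_⟩, hAmeet, fun B hBA hBcl hBmeet =>
    hAmin B ⟨hBA.trans hAC, hBcl, hBmeet⟩ hBA⟩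
  · obtain ⟨K, hK⟩ := h𝒜.1
    exact (hAmeet K hK).mono inter_subset_right |>.mono subset_rfl |>.imp fun x h => h
  · intro U V hU hV hAU hAV
    by_contra hcon
    rw [Set.not_nonempty_iff_eq_empty] at hcon
    -- A₁ = A \ U, A₂ = A \ V are proper closed subsets of A covering A
    have key : ∀ W : Set X, IsOpen W → (A ∩ W).Nonempty →
        ∃ K ∈ 𝒜, (K : Set X) ∩ (A \ W) = ∅ := by
      intro W hW ⟨x, hxA, hxW⟩
      by_contra h
      push_neg at h
      have : A \ W = A := hAmin (A \ W) ⟨diff_subset.trans hAC, hAcl.sdiff hW,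
        fun K hK => h K hK⟩ diff_subset
      exact ((this.ge : A ⊆ A \ W) hxA).2 hxW
    obtain ⟨K₁, hK₁, hK₁e⟩ := key U hU hAU
    obtain ⟨K₂, hK₂, hK₂e⟩ := key V hV hAV
    -- □(A \ U)ᶜ and □(A \ V)ᶜ are open in the Smyth space
    have box : ∀ F : Set X, IsClosed F →
        IsOpen {K : KS X | (K : Set X) ⊆ Fᶜ} := fun F hF =>
      TopologicalSpace.GenerateOpen.basic _ ⟨Fᶜ, hF.isOpen_compl, rfl⟩
    have h1 : (𝒜 ∩ {K : KS X | (K : Set X) ⊆ (A \ U)ᶜ}).Nonempty :=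
      ⟨K₁, hK₁, fun x hx => fun hx' => (eq_empty_iff_forall_notMem.1 hK₁e x) ⟨hx, hx'⟩⟩
    have h2 : (𝒜 ∩ {K : KS X | (K : Set X) ⊆ (A \ V)ᶜ}).Nonempty :=
      ⟨K₂, hK₂, fun x hx => fun hx' => (eq_empty_iff_forall_notMem.1 hK₂e x) ⟨hx, hx'⟩⟩
    obtain ⟨K, hK𝒜, hKU, hKV⟩ := h𝒜.2 _ _ (box _ (hAcl.sdiff hU)) (box _ (hAcl.sdiff hV)) h1 h2
    obtain ⟨x, hxK, hxA⟩ := hAmeet K hK𝒜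
    rcases (em (x ∈ U)) with hxU | hxU
    · rcases (em (x ∈ V)) with hxV | hxV
      · exact (eq_empty_iff_forall_notMem.1 hcon x) ⟨hxA, hxU, hxV⟩
      · exact hKV hxK ⟨hxA, hxV⟩
    · exact hKU hxK ⟨hxA, hxU⟩
end

section
/- For any T0 space X the following inclusions hold: every closure of a singleton is the closure of a directed set; the closure of any subset that is directed in the specialization order is a Rudin set; every Rudin set is a well-filtered determined (WD) set; and every WD set is an irreducible closed set. That is, S_c(X) ⊆ D_c(X) ⊆ RD(X) ⊆ WD(X) ⊆ Irr_c(X). -/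
open Set Topology

universe u

variable {X : Type u}

section

variable [TopologicalSpace X]

lemma specLE_iff_specializes {x y : X} : specLE x y ↔ y ⤳ x :=
  specializes_iff_mem_closure.symm

lemma isSat_nhdsKer (s : Set X) : IsSat (nhdsKer s) := by
  rw [IsSat, ← nhdsKer_def, nhdsKer_nhdsKer]

lemma nhdsKer_mem_kSet {s : Set X} (hne : s.Nonempty) (hs : IsCompact s) :
    nhdsKer s ∈ KSet X :=
  ⟨hne.mono subset_nhdsKer, hs.nhdsKer, isSat_nhdsKer s⟩

lemma dirOn_singleton (x : X) : dirOn ({x} : Set X) :=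
  ⟨singleton_nonempty x, by
    rintro _ rfl _ rfl
    exact ⟨_, rfl, specLE_iff_specializes.2 specializes_rfl,
      specLE_iff_specializes.2 specializes_rfl⟩⟩

lemma FiltFam.image {Y : Type*} [TopologicalSpace Y] {𝒦 : Set (Set X)} (h𝒦 : FiltFam 𝒦)
    {g : Set X → Set Y} (hg : Monotone g) : FiltFam (g '' 𝒦) := by
  refine ⟨h𝒦.1.image g, ?_⟩
  rintro _ ⟨K₁, hK₁, rfl⟩ _ ⟨K₂, hK₂, rfl⟩
  obtain ⟨K₃, hK₃, h₁, h₂⟩ := h𝒦.2 K₁ hK₁ K₂ hK₂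
  exact ⟨g K₃, mem_image_of_mem g hK₃, hg h₁, hg h₂⟩

lemma FiltFam.exists_subset_forall [Finite X] {𝒦 : Set (Set X)} (h𝒦 : FiltFam 𝒦) :
    ∃ K₀ ∈ 𝒦, ∀ K ∈ 𝒦, K₀ ⊆ K := by
  obtain ⟨K₀, hK₀, hmin⟩ := 𝒦.toFinite.exists_minimalFor id 𝒦 h𝒦.1
  refine ⟨K₀, hK₀, fun K hK => ?_⟩
  obtain ⟨K₃, hK₃, h₀, h⟩ := h𝒦.2 K₀ hK₀ K hK
  exact (hmin hK₃ h₀).trans h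

lemma isWF_of_finite [Finite X] [T0Space X] : IsWF X := by
  refine ⟨inferInstance, fun 𝒦 _ h𝒦 U _ hU => ?_⟩
  obtain ⟨K₀, hK₀, hmin⟩ := h𝒦.exists_subset_forall
  exact ⟨K₀, hK₀, (subset_sInter hmin).trans hU⟩

lemma IsWF.sInter_inter_nonempty (hX : IsWF X) {𝒦 : Set (Set X)} (h𝒦K : 𝒦 ⊆ KSet X)
    (h𝒦 : FiltFam 𝒦) {C : Set X} (hC : IsClosed C) (hmeet : ∀ K ∈ 𝒦, (K ∩ C).Nonempty) :
    (⋂₀ 𝒦 ∩ C).Nonempty := by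
  by_contra h
  obtain ⟨K, hK, hKC⟩ := hX.2 𝒦 h𝒦K h𝒦 Cᶜ hC.isOpen_compl
    fun y hy hyC => h ⟨y, hy, hyC⟩
  obtain ⟨y, hyK, hyC⟩ := hmeet K hK
  exact hKC hyK hyC

/-- Witnessed by the family of upper sets `nhdsKer {d} = ↑d`, `d ∈ D`. -/
lemma rudinSet_closure_of_dirOn {D : Set X} (hD : dirOn D) : RudinSet (closure D) := by
  refine ⟨isClosed_closure, hD.1.mono subset_closure, (fun d => nhdsKer {d}) '' D,
    ?_, ⟨hD.1.image _, ?_⟩, ?_, ?_⟩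
  · rintro _ ⟨d, -, rfl⟩
    exact nhdsKer_mem_kSet (singleton_nonempty d) isCompact_singleton
  · rintro _ ⟨a, ha, rfl⟩ _ ⟨b, hb, rfl⟩
    obtain ⟨c, hc, hac, hbc⟩ := hD.2 a ha b hb
    exact ⟨nhdsKer {c}, mem_image_of_mem _ hc,
      specializes_iff_nhdsKer_subset.1 (specLE_iff_specializes.1 hac),
      specializes_iff_nhdsKer_subset.1 (specLE_iff_specializes.1 hbc)⟩
  · rintro _ ⟨d, hd, rfl⟩
    exact ⟨d, subset_nhdsKer rfl, subset_closure hd⟩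
  · intro B hB hBA hmeet
    refine hBA.antisymm (closure_minimal (fun d hd => ?_) hB)
    obtain ⟨x, hxd, hxB⟩ := hmeet _ (mem_image_of_mem _ hd)
    exact (mem_nhdsKer_singleton.1 hxd).mem_closed hB hxB

/-- For `f : X → Y` continuous with `Y` well-filtered, the images `nhdsKer (f '' (K ∩ A))`
of the Rudin family have a common point `y` in `closure (f '' A)`; minimality of `A`
then forces `A ⊆ f ⁻¹' closure {y}`. -/
lemma RudinSet.isWDSet {A : Set X} (hA : RudinSet A) : IsWDSet A := by
  obtain ⟨hAc, hAne, 𝒦, h𝒦K, h𝒦, hmeet, hmin⟩ := hA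
  refine ⟨hAc, hAne, fun Y _ hY f hf => ?_⟩
  set g : Set X → Set Y := fun K => nhdsKer (f '' (K ∩ A))
  have hgK : g '' 𝒦 ⊆ KSet Y := by
    rintro _ ⟨K, hK, rfl⟩
    exact nhdsKer_mem_kSet ((hmeet K hK).image f)
      (((h𝒦K hK).2.1.inter_right hAc).image hf)
  have hg : Monotone g := fun _ _ h => nhdsKer_mono (image_mono (inter_subset_inter_left A h))
  have hgA : ∀ K' ∈ g '' 𝒦, (K' ∩ closure (f '' A)).Nonempty := by
    rintro _ ⟨K, hK, rfl⟩
    obtain ⟨x, hx⟩ := hmeet K hK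
    exact ⟨f x, subset_nhdsKer (mem_image_of_mem f hx), subset_closure ⟨x, hx.2, rfl⟩⟩
  obtain ⟨y, hy𝒦, hyA⟩ := hY.sInter_inter_nonempty hgK (h𝒦.image hg) isClosed_closure hgA
  have hApre : A ∩ f ⁻¹' closure {y} = A := by
    refine hmin _ (hAc.inter (isClosed_closure.preimage hf)) inter_subset_left fun K hK => ?_
    obtain ⟨_, ⟨x, hx, rfl⟩, hyx⟩ := mem_nhdsKer_iff_specializes.1 (hy𝒦 _ ⟨K, hK, rfl⟩)
    exact ⟨x, hx.1, hx.2, specializes_iff_mem_closure.1 hyx⟩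
  refine ⟨y, (closure_minimal ?_ isClosed_closure).antisymm
    (closure_minimal (singleton_subset_iff.2 hyA) isClosed_closure)⟩
  rw [← hApre, image_subset_iff]
  exact inter_subset_right

/-- Irreducibility is tested by mapping `A` into `Prop × Prop`, a finite product of
Sierpiński spaces (hence well-filtered), via `w ↦ (w ∈ U, w ∈ V)`; the `ULift` is needed
because `IsWDSet` only quantifies over spaces in the universe of `X`. -/
lemma IsWDSet.isIrreducible {A : Set X} (hA : IsWDSet A) : IsIrreducible A := by
  obtain ⟨-, hAne, hWD⟩ := hA
  refine ⟨hAne, fun U V hU hV hAU hAV => ?_⟩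
  let f : X → ULift.{u} (Prop × Prop) := fun w => ⟨(w ∈ U, w ∈ V)⟩
  have hf : Continuous f := continuous_uliftUp.comp
    ((continuous_Prop.2 hU).prodMk (continuous_Prop.2 hV))
  have htrue : IsOpen {p : Prop | p} := continuous_Prop.1 continuous_id
  have hU' : IsOpen {w : ULift.{u} (Prop × Prop) | w.down.1} :=
    htrue.preimage (continuous_fst.comp continuous_uliftDown)
  have hV' : IsOpen {w : ULift.{u} (Prop × Prop) | w.down.2} :=
    htrue.preimage (continuous_snd.comp continuous_uliftDown)
  obtain ⟨y, hy⟩ := hWD _ isWF_of_finite f hf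
  have hirr : IsPreirreducible (f '' A) :=
    (isIrreducible_iff_closure.1 (hy ▸ isIrreducible_singleton.closure)).2
  obtain ⟨x, hxA, hxU⟩ := hAU
  obtain ⟨z, hzA, hzV⟩ := hAV
  obtain ⟨_, ⟨a, ha, rfl⟩, haUV⟩ :=
    hirr _ _ hU' hV' ⟨f x, mem_image_of_mem f hxA, hxU⟩ ⟨f z, mem_image_of_mem f hzA, hzV⟩
  exact ⟨a, ha, haUV⟩

end

theorem stmt7_general {X : Type u} [TopologicalSpace X] :
    {A : Set X | ∃ x : X, A = closure {x}} ⊆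
        {A : Set X | ∃ D : Set X, dirOn D ∧ A = closure D} ∧
      {A : Set X | ∃ D : Set X, dirOn D ∧ A = closure D} ⊆ {A : Set X | RudinSet A} ∧
      {A : Set X | RudinSet A} ⊆ {A : Set X | IsWDSet A} ∧
      {A : Set X | IsWDSet A} ⊆ {A : Set X | IsClosed A ∧ IsIrreducible A} := by
  refine ⟨?_, ?_, fun A hA => hA.isWDSet, fun A hA => ⟨hA.1, hA.isIrreducible⟩⟩
  · rintro A ⟨x, rfl⟩
    exact ⟨{x}, dirOn_singleton x, rfl⟩
  · rintro A ⟨D, hD, rfl⟩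
    exact rudinSet_closure_of_dirOn hD

/-- `S_c(X) ⊆ D_c(X) ⊆ RD(X) ⊆ WD(X) ⊆ Irr_c(X)` for any T0 space. -/
theorem stmt7 {X : Type u} [TopologicalSpace X] [T0Space X] :
    {A : Set X | ∃ x : X, A = closure {x}} ⊆
        {A : Set X | ∃ D : Set X, dirOn D ∧ A = closure D} ∧
      {A : Set X | ∃ D : Set X, dirOn D ∧ A = closure D} ⊆ {A : Set X | RudinSet A} ∧
      {A : Set X | RudinSet A} ⊆ {A : Set X | IsWDSet A} ∧
      {A : Set X | IsWDSet A} ⊆ {A : Set X | IsClosed A ∧ IsIrreducible A} :=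
  stmt7_general
end

section
/- Every locally compact T0 space is a Rudin space. -/
open Set Topology

universe u

variable {X : Type u}

/-- Saturation of a set. -/
def satOf [TopologicalSpace X] (K : Set X) : Set X := ⋂₀ {U : Set X | IsOpen U ∧ K ⊆ U}

lemma subset_satOf [TopologicalSpace X] (K : Set X) : K ⊆ satOf K := fun x hx U hU => hU.2 hx

lemma satOf_subset [TopologicalSpace X] {K U : Set X} (hU : IsOpen U) (h : K ⊆ U) :
    satOf K ⊆ U := fun x hx => hx U ⟨hU, h⟩

lemma isCompact_satOf [TopologicalSpace X] {K : Set X} (hK : IsCompact K) :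
    IsCompact (satOf K) := by
  apply isCompact_of_finite_subcover
  intro ι U hUo hcov
  obtain ⟨t, ht⟩ := hK.elim_finite_subcover U hUo ((subset_satOf K).trans hcov)
  exact ⟨t, satOf_subset (isOpen_biUnion fun i _ => hUo i) ht⟩

lemma isSat_satOf [TopologicalSpace X] (K : Set X) : IsSat (satOf K) := by
  unfold IsSat
  have : {U : Set X | IsOpen U ∧ K ⊆ U} = {U : Set X | IsOpen U ∧ satOf K ⊆ U} := by
    ext U
    exact and_congr_right fun hU =>
      ⟨fun h => satOf_subset hU h, fun h => (subset_satOf K).trans h⟩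
  conv_lhs => rw [satOf, this]

lemma satOf_mem_KSet [TopologicalSpace X] {K : Set X} (hne : K.Nonempty) (hK : IsCompact K) :
    satOf K ∈ KSet X :=
  ⟨hne.mono (subset_satOf K), isCompact_satOf hK, isSat_satOf K⟩

/-- every locally compact T0 space is a Rudin space. -/
theorem stmt11 {X : Type u} [TopologicalSpace X] [T0Space X] [LocallyCompactSpace X] :
    RudinSpace X := by
  intro A hAc hAirr
  refine ⟨hAc, hAirr.1, {K | K ∈ KSet X ∧ (interior K ∩ A).Nonempty}, fun K hK => hK.1, ?_, ?_, ?_⟩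
  · constructor
    · obtain ⟨x, hx⟩ := hAirr.1
      obtain ⟨K, hKc, hxi, _⟩ := exists_compact_subset isOpen_univ (mem_univ x)
      refine ⟨satOf K, satOf_mem_KSet ⟨x, interior_subset hxi⟩ hKc, x,
        interior_mono (subset_satOf K) hxi, hx⟩
    · rintro K₁ ⟨hK₁, hi₁⟩ K₂ ⟨hK₂, hi₂⟩
      obtain ⟨x, hxA, hx1, hx2⟩ := hAirr.2 _ _ isOpen_interior isOpen_interior
        (by obtain ⟨y, hy, hyA⟩ := hi₁; exact ⟨y, hyA, hy⟩)
        (by obtain ⟨y, hy, hyA⟩ := hi₂; exact ⟨y, hyA, hy⟩)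
      obtain ⟨K₃, hK₃c, hxi, hK₃sub⟩ :=
        exists_compact_subset (isOpen_interior.inter isOpen_interior) ⟨hx1, hx2⟩
      have hsat := satOf_subset (isOpen_interior.inter isOpen_interior) hK₃sub
      refine ⟨satOf K₃, ⟨satOf_mem_KSet ⟨x, interior_subset hxi⟩ hK₃c,
        x, interior_mono (subset_satOf K₃) hxi, hxA⟩,
        fun z hz => interior_subset (hsat hz).1,
        fun z hz => interior_subset (hsat hz).2⟩
  · rintro K ⟨hK, x, hxi, hxA⟩
    exact ⟨x, interior_subset hxi, hxA⟩
  · intro B hBc hBA hBmeets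
    by_contra hne
    obtain ⟨x, hxA, hxB⟩ : (A \ B).Nonempty := by
      rcases eq_or_ssubset_of_subset hBA with h | h
      · exact absurd h hne
      · exact diff_nonempty.mpr (fun hh => h.not_subset hh)
    obtain ⟨K, hKc, hxi, hKB⟩ := exists_compact_subset hBc.isOpen_compl hxB
    have hmem : satOf K ∈ {K | K ∈ KSet X ∧ (interior K ∩ A).Nonempty} :=
      ⟨satOf_mem_KSet ⟨x, interior_subset hxi⟩ hKc,
        x, interior_mono (subset_satOf K) hxi, hxA⟩
    obtain ⟨y, hyK, hyB⟩ := hBmeets _ hmem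
    exact satOf_subset hBc.isOpen_compl hKB hyK hyB
end

section
/- (Heckmann–Keimel–Schalk Theorem) For a T0 space X, the following conditions are equivalent: (1) X is sober; (2) for every subset 𝒜 ⊆ K(X) that is irreducible in the Smyth power space P_S(X) and every open U ⊆ X, ⋂𝒜 ⊆ U implies K ⊆ U for some K ∈ 𝒜; (3) the Smyth power space P_S(X) is sober. -/
open Set Topology

universe u

variable {X : Type u}

section Aux
variable [TopologicalSpace X]

lemma specLE_iff' {a b : X} : specLE a b ↔ ∀ U : Set X, IsOpen U → a ∈ U → b ∈ U := by
  simp [specLE, mem_closure_iff, Set.inter_singleton_nonempty]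

lemma specLE_refl' (a : X) : specLE a a := subset_closure rfl

lemma sat_mem' {K : Set X} (hK : IsSat K) {k x : X} (hk : k ∈ K) (h : specLE k x) : x ∈ K := by
  rw [hK, Set.mem_sInter]
  rintro U ⟨hU, hKU⟩
  exact specLE_iff'.1 h U hU (hKU hk)

lemma ksBasis (X : Type u) [TopologicalSpace X] : TopologicalSpace.IsTopologicalBasis
    {S : Set (KS X) | ∃ U : Set X, IsOpen U ∧ S = {K : KS X | (K : Set X) ⊆ U}} := by
  refine ⟨?_, ?_, rfl⟩
  · rintro t₁ ⟨U, hU, rfl⟩ t₂ ⟨V, hV, rfl⟩ K ⟨hKU, hKV⟩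
    exact ⟨{K : KS X | (K : Set X) ⊆ U ∩ V}, ⟨U ∩ V, hU.inter hV, rfl⟩,
      Set.subset_inter hKU hKV,
      fun A hA => ⟨hA.trans Set.inter_subset_left, hA.trans Set.inter_subset_right⟩⟩
  · refine Set.eq_univ_of_forall fun K => ?_
    exact ⟨{K : KS X | (K : Set X) ⊆ Set.univ}, ⟨Set.univ, isOpen_univ, rfl⟩, Set.subset_univ _⟩

lemma ksClosureSingleton (K₀ : KS X) :
    closure ({K₀} : Set (KS X)) = {A : KS X | (K₀ : Set X) ⊆ (A : Set X)} := by
  ext A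
  rw [(ksBasis X).mem_closure_iff]
  constructor
  · intro h x hx
    rw [A.2.2.2, Set.mem_sInter]
    rintro U ⟨hU, hAU⟩
    obtain ⟨B, hB1, hB2⟩ := h _ ⟨U, hU, rfl⟩ hAU
    rw [Set.mem_singleton_iff] at hB2
    subst hB2
    exact hB1 hx
  · rintro h o ⟨U, hU, rfl⟩ hA
    exact ⟨K₀, ⟨show (K₀ : Set X) ⊆ U from h.trans hA, rfl⟩⟩

def upPt (a : X) : Set X := {x | specLE a x}

lemma upPt_subset {a : X} {U : Set X} (hU : IsOpen U) (ha : a ∈ U) : upPt a ⊆ U :=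
  fun _ hx => specLE_iff'.1 hx U hU ha

lemma upPt_mem_KSet (a : X) : (upPt a).Nonempty ∧ IsCompact (upPt a) ∧ IsSat (upPt a) := by
  refine ⟨⟨a, specLE_refl' a⟩, ?_, ?_⟩
  · apply isCompact_of_finite_subcover
    intro ι U hU hcov
    obtain ⟨i, hi⟩ := Set.mem_iUnion.1 (hcov (specLE_refl' a))
    exact ⟨{i}, by simpa using upPt_subset (hU i) hi⟩
  · apply Set.Subset.antisymm
    · intro x hx
      rw [Set.mem_sInter]
      rintro U ⟨hU, hsub⟩
      exact hsub hx
    · have h1 : {U : Set X | IsOpen U ∧ a ∈ U} ⊆ {U : Set X | IsOpen U ∧ upPt a ⊆ U} := by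
        rintro U ⟨hU, haU⟩
        exact ⟨hU, upPt_subset hU haU⟩
      refine (Set.sInter_subset_sInter h1).trans ?_
      intro x hx
      show specLE a x
      rw [specLE_iff']
      intro U hU haU
      exact Set.mem_sInter.1 hx U ⟨hU, haU⟩

end Aux

/-- Heckmann–Keimel–Schalk: for a T0 space `X`: `X` is sober iff for
every irreducible `𝒜 ⊆ K(X)` (in the Smyth power space) and open `U`, `⋂𝒜 ⊆ U` implies
`K ⊆ U` for some `K ∈ 𝒜`, iff the Smyth power space is sober. -/
theorem stmt15 {X : Type u} [TopologicalSpace X] [T0Space X] :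
    List.TFAE [IsSober X,
      ∀ 𝒜 : Set (KS X), IsIrreducible 𝒜 → ∀ U : Set X, IsOpen U →
        (⋂ K ∈ 𝒜, (K : Set X)) ⊆ U → ∃ K ∈ 𝒜, (K : Set X) ⊆ U,
      IsSober (KS X)] := by
  tfae_have 1 → 2 := by
    intro hsob 𝒜 h𝒜 U hU hsub
    by_contra hcon
    push_neg at hcon
    have hmeet : ∀ K ∈ 𝒜, ((K : Set X) ∩ Uᶜ).Nonempty := by
      intro K hK
      rcases Set.not_subset.1 (hcon K hK) with ⟨x, hxK, hxU⟩
      exact ⟨x, hxK, hxU⟩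
    set S : Set (Set X) :=
      {B | IsClosed B ∧ B ⊆ Uᶜ ∧ ∀ K ∈ 𝒜, ((K : Set X) ∩ B).Nonempty} with hS
    have hzorn : ∀ c ⊆ S, IsChain (· ⊆ ·) c → ∃ lb ∈ S, ∀ s ∈ c, lb ⊆ s := by
      intro c hcS hchain
      rcases Set.eq_empty_or_nonempty c with rfl | hcne
      · exact ⟨Uᶜ, ⟨hU.isClosed_compl, Set.Subset.rfl, hmeet⟩, fun s hs => hs.elim⟩
      · refine ⟨⋂₀ c, ⟨?_, ?_, ?_⟩, fun s hs => Set.sInter_subset_of_mem hs⟩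
        · exact isClosed_sInter fun b hb => (hcS hb).1
        · obtain ⟨b, hb⟩ := hcne
          exact (Set.sInter_subset_of_mem hb).trans (hcS hb).2.1
        · intro K hK
          rw [Set.nonempty_iff_ne_empty]
          intro hempty
          have : Nonempty c := hcne.to_subtype
          have hdir : Directed (· ⊇ ·) (fun b : c => (b : Set X)) := by
            intro b₁ b₂
            rcases hchain.total b₁.2 b₂.2 with h | h
            · exact ⟨b₁, Set.Subset.rfl, h⟩
            · exact ⟨b₂, h, Set.Subset.rfl⟩
          obtain ⟨⟨b, hb⟩, hbK⟩ := K.2.2.1.elim_directed_family_closed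
            (fun b : c => (b : Set X)) (fun b => (hcS b.2).1)
            (by rw [← Set.sInter_eq_iInter]; exact hempty) hdir
          exact Set.nonempty_iff_ne_empty.1 ((hcS hb).2.2 K hK) hbK
    obtain ⟨B, hBS, hBmin⟩ := zorn_superset S hzorn
    obtain ⟨hBclosed, hBC, hBmeet⟩ := hBS
    have hBne : B.Nonempty := by
      obtain ⟨K, hK⟩ := h𝒜.1
      obtain ⟨x, _, hxB⟩ := hBmeet K hK
      exact ⟨x, hxB⟩
    have hBirr : IsIrreducible B := by
      refine ⟨hBne, fun u v hu hv hBu hBv => ?_⟩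
      by_contra hcon2
      have hBuv : B ∩ (u ∩ v) = ∅ := Set.not_nonempty_iff_eq_empty.1 hcon2
      have hnotS : ∀ w : Set X, IsOpen w → (B ∩ w).Nonempty →
          ∃ K ∈ 𝒜, ((K : Set X) ∩ (B ∩ wᶜ)) = ∅ := by
        intro w hw hBw
        by_contra hc
        push_neg at hc
        have hmem : B ∩ wᶜ ∈ S := by
          refine ⟨hBclosed.inter hw.isClosed_compl, Set.inter_subset_left.trans hBC, ?_⟩
          intro K hK
          exact hc K hK
        obtain ⟨x, hxB, hxw⟩ := hBw
        exact (hBmin hmem Set.inter_subset_left hxB).2 hxw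
      obtain ⟨K₁, hK₁𝒜, hK₁⟩ := hnotS u hu hBu
      obtain ⟨K₂, hK₂𝒜, hK₂⟩ := hnotS v hv hBv
      have hW₁ : IsOpen (B ∩ uᶜ)ᶜ := (hBclosed.inter hu.isClosed_compl).isOpen_compl
      have hW₂ : IsOpen (B ∩ vᶜ)ᶜ := (hBclosed.inter hv.isClosed_compl).isOpen_compl
      have hbo₁ : IsOpen {K : KS X | (K : Set X) ⊆ (B ∩ uᶜ)ᶜ} :=
        (ksBasis X).isOpen ⟨_, hW₁, rfl⟩
      have hbo₂ : IsOpen {K : KS X | (K : Set X) ⊆ (B ∩ vᶜ)ᶜ} :=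
        (ksBasis X).isOpen ⟨_, hW₂, rfl⟩
      have hne₁ : (𝒜 ∩ {K : KS X | (K : Set X) ⊆ (B ∩ uᶜ)ᶜ}).Nonempty :=
        ⟨K₁, hK₁𝒜, Set.subset_compl_iff_disjoint_right.2
          (Set.disjoint_iff_inter_eq_empty.2 hK₁)⟩
      have hne₂ : (𝒜 ∩ {K : KS X | (K : Set X) ⊆ (B ∩ vᶜ)ᶜ}).Nonempty :=
        ⟨K₂, hK₂𝒜, Set.subset_compl_iff_disjoint_right.2
          (Set.disjoint_iff_inter_eq_empty.2 hK₂)⟩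
      obtain ⟨K, hK𝒜, hKu, hKv⟩ := h𝒜.2 _ _ hbo₁ hbo₂ hne₁ hne₂
      obtain ⟨x, hxK, hxB⟩ := hBmeet K hK𝒜
      have hxuv : x ∉ u ∩ v := fun h => Set.eq_empty_iff_forall_notMem.1 hBuv x ⟨hxB, h⟩
      rcases Classical.em (x ∈ u) with hxu | hxu
      · rcases Classical.em (x ∈ v) with hxv | hxv
        · exact hxuv ⟨hxu, hxv⟩
        · exact hKv hxK ⟨hxB, hxv⟩
      · exact hKu hxK ⟨hxB, hxu⟩
    obtain ⟨x, hx, -⟩ := hsob B hBirr hBclosed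
    have hxB : x ∈ B := by rw [hx]; exact subset_closure rfl
    have hxint : x ∈ ⋂ K ∈ 𝒜, (K : Set X) := by
      refine Set.mem_iInter₂.2 fun K hK => ?_
      obtain ⟨k, hkK, hkB⟩ := hBmeet K hK
      have hkx : specLE k x := by rw [hx] at hkB; exact hkB
      exact sat_mem' K.2.2.2 hkK hkx
    exact hBC hxB (hsub hxint)
  tfae_have 2 → 3 := by
    intro h2 𝒜 h𝒜irr h𝒜closed
    have hprop : ∀ U : Set X, IsOpen U → (⋂ K ∈ 𝒜, (K : Set X)) ⊆ U →
        ∃ K ∈ 𝒜, (K : Set X) ⊆ U := h2 𝒜 h𝒜irr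
    have hne : (⋂ K ∈ 𝒜, (K : Set X)).Nonempty := by
      rw [Set.nonempty_iff_ne_empty]
      intro he
      obtain ⟨K, _, hKsub⟩ := hprop ∅ isOpen_empty (by rw [he])
      exact K.2.1.ne_empty (Set.subset_empty_iff.1 hKsub)
    have hcomp : IsCompact (⋂ K ∈ 𝒜, (K : Set X)) := by
      apply isCompact_of_finite_subcover
      intro ι V hVo hcov
      obtain ⟨K, hK, hKsub⟩ := hprop (⋃ i, V i) (isOpen_iUnion hVo) hcov
      obtain ⟨t, ht⟩ := K.2.2.1.elim_finite_subcover V hVo hKsub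
      exact ⟨t, (Set.biInter_subset_of_mem hK).trans ht⟩
    have hsat : IsSat (⋂ K ∈ 𝒜, (K : Set X)) := by
      apply Set.Subset.antisymm
      · intro x hx
        rw [Set.mem_sInter]
        rintro V ⟨_, hsub⟩
        exact hsub hx
      · intro x hx
        refine Set.mem_iInter₂.2 fun K hK => ?_
        have h1 : {V : Set X | IsOpen V ∧ (K : Set X) ⊆ V} ⊆
            {V : Set X | IsOpen V ∧ (⋂ K ∈ 𝒜, (K : Set X)) ⊆ V} := by
          rintro V ⟨hV, hKV⟩
          exact ⟨hV, (Set.biInter_subset_of_mem hK).trans hKV⟩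
        have h2 := Set.sInter_subset_sInter h1 hx
        rwa [← K.2.2.2] at h2
    set K₀ : KS X := ⟨⋂ K ∈ 𝒜, (K : Set X), hne, hcomp, hsat⟩ with hK₀def
    have hmain : 𝒜 = closure ({K₀} : Set (KS X)) := by
      rw [ksClosureSingleton]
      apply Set.Subset.antisymm
      · intro A hA
        exact Set.biInter_subset_of_mem hA
      · intro A hA
        by_contra hAn
        obtain ⟨t, ⟨V, hV, rfl⟩, hAt, hts⟩ :=
          (ksBasis X).isOpen_iff.1 h𝒜closed.isOpen_compl A hAn
        obtain ⟨K, hK, hKV⟩ := hprop V hV (hA.trans hAt)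
        exact hts hKV hK
    refine ⟨K₀, hmain, fun B hB => ?_⟩
    have hBK : (K₀ : Set X) ⊆ (B : Set X) := by
      have hmem : B ∈ closure ({K₀} : Set (KS X)) := by
        rw [← hmain, hB]; exact subset_closure rfl
      rwa [ksClosureSingleton] at hmem
    have hKB : (B : Set X) ⊆ (K₀ : Set X) := by
      have hmem : K₀ ∈ closure ({B} : Set (KS X)) := by
        rw [← hB, hmain]; exact subset_closure rfl
      rwa [ksClosureSingleton] at hmem
    exact Subtype.ext (Set.Subset.antisymm hKB hBK)
  tfae_have 3 → 1 := by
    intro h3 A hAirr hAclosed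
    set 𝒜 : Set (KS X) := {K | ((K : Set X) ∩ A).Nonempty} with h𝒜
    have hup : ∀ a ∈ A, (⟨upPt a, upPt_mem_KSet a⟩ : KS X) ∈ 𝒜 :=
      fun a ha => ⟨a, specLE_refl' a, ha⟩
    have h𝒜closed : IsClosed 𝒜 := by
      rw [← isOpen_compl_iff]
      have hceq : 𝒜ᶜ = {K : KS X | (K : Set X) ⊆ Aᶜ} := by
        ext K
        constructor
        · intro hK x hx hxA
          exact hK ⟨x, hx, hxA⟩
        · rintro hK ⟨x, hx, hxA⟩
          exact hK hx hxA
      rw [hceq]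
      exact (ksBasis X).isOpen ⟨Aᶜ, hAclosed.isOpen_compl, rfl⟩
    have h𝒜irr : IsIrreducible 𝒜 := by
      obtain ⟨a₀, ha₀⟩ := hAirr.1
      refine ⟨⟨_, hup a₀ ha₀⟩, fun u v hu hv huA hvA => ?_⟩
      obtain ⟨K₁, hK₁𝒜, hK₁u⟩ := huA
      obtain ⟨K₂, hK₂𝒜, hK₂v⟩ := hvA
      obtain ⟨t₁, ⟨U, hU, rfl⟩, hK₁t, htu⟩ := (ksBasis X).isOpen_iff.1 hu K₁ hK₁u
      obtain ⟨t₂, ⟨V, hV, rfl⟩, hK₂t, htv⟩ := (ksBasis X).isOpen_iff.1 hv K₂ hK₂v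
      obtain ⟨x₁, hx₁K, hx₁A⟩ := hK₁𝒜
      obtain ⟨x₂, hx₂K, hx₂A⟩ := hK₂𝒜
      obtain ⟨a, haA, haU, haV⟩ :=
        hAirr.2 U V hU hV ⟨x₁, hx₁A, hK₁t hx₁K⟩ ⟨x₂, hx₂A, hK₂t hx₂K⟩
      exact ⟨⟨upPt a, upPt_mem_KSet a⟩, hup a haA,
        htu (upPt_subset hU haU), htv (upPt_subset hV haV)⟩
    obtain ⟨K₀, hK₀eq, -⟩ := h3 𝒜 h𝒜irr h𝒜closed
    rw [ksClosureSingleton] at hK₀eq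
    have hK₀𝒜 : K₀ ∈ 𝒜 := by
      rw [hK₀eq]; exact Set.Subset.rfl
    obtain ⟨x, hxK₀, hxA⟩ := hK₀𝒜
    have hAx : A = closure ({x} : Set X) := by
      apply Set.Subset.antisymm
      · intro a ha
        have h1 : (K₀ : Set X) ⊆ upPt a := by
          have hmem := hup a ha
          rw [hK₀eq] at hmem
          exact hmem
        exact h1 hxK₀
      · exact closure_minimal (Set.singleton_subset_iff.2 hxA) hAclosed
    refine ⟨x, hAx, fun y hy => ?_⟩
    have : closure ({y} : Set X) = closure ({x} : Set X) := by rw [← hy, ← hAx]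
    exact (inseparable_iff_closure_eq.2 this).eq
  tfae_finish
end
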